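/- arXiv:2005.13960 — 2 statements merged into one kernel-verified Lean document; each statement's English description precedes it below -/
import Mathlib

section
/- Let π = (n₁ ≥ ⋯ ≥ n_s) be a partition of n into positive parts and let A = a·E^π + b·Ẽ^π + c·X^π with a, b, c ∈ ℂ. Then [A*, [A, [A*, A]]] = 2(|a|² + |b|² + 2|c|²) · [A*, A]. -/
open Matrix

/-- `e_k`: the `k×k` matrix with `(e_k)_{j,j+1} = √(j(k−j))` (1-indexed) and zeros elsewhere. -/
noncomputable def eMat (k : ℕ) : Matrix (Fin k) (Fin k) ℂ :=
  Matrix.of fun i j =>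
    if (j : ℕ) = (i : ℕ) + 1 then
      (Real.sqrt (((i : ℕ) + 1) * (k - ((i : ℕ) + 1))) : ℂ)
    else 0

/-- `x_k = diag(k−1, k−3, …, 1−k)`. -/
noncomputable def xMat (k : ℕ) : Matrix (Fin k) (Fin k) ℂ :=
  Matrix.diagonal fun i => (((k : ℤ) - 1 - 2 * (i : ℕ) : ℤ) : ℂ)

/-- For a list `l` of block sizes and a position `i` (0-based), `blockOf l i` is the pair
(size of the block containing position `i`, offset of `i` within that block). -/
def blockOf : List ℕ → ℕ → ℕ × ℕ
  | [], i => (0, i)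
  | k :: t, i => if i < k then (k, i) else blockOf t (i - k)

/-- `E^π = diag(e_{n₁},…,e_{n_s})`, block diagonal with blocks given by the partition
`l = (n₁,…,n_s)`, as an `n×n` matrix (where `n = Σ nᵢ`). -/
noncomputable def EpiMat (l : List ℕ) (n : ℕ) : Matrix (Fin n) (Fin n) ℂ :=
  Matrix.of fun i j =>
    if (j : ℕ) = (i : ℕ) + 1 ∧ (blockOf l (i : ℕ)).2 + 1 < (blockOf l (i : ℕ)).1 then
      (Real.sqrt (((blockOf l (i : ℕ)).2 + 1) *
        ((blockOf l (i : ℕ)).1 - ((blockOf l (i : ℕ)).2 + 1))) : ℂ)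
    else 0

/-- `X^π = diag(x_{n₁},…,x_{n_s})`, block diagonal as an `n×n` matrix. -/
noncomputable def XpiMat (l : List ℕ) (n : ℕ) : Matrix (Fin n) (Fin n) ℂ :=
  Matrix.diagonal fun i =>
    ((((blockOf l (i : ℕ)).1 : ℤ) - 1 - 2 * ((blockOf l (i : ℕ)).2 : ℤ) : ℤ) : ℂ)

/-- Squared Frobenius norm `|A|² = tr(A·A*)`. -/
noncomputable def frobSq {m : Type*} [Fintype m] (A : Matrix m m ℂ) : ℝ :=
  (Matrix.trace (A * Aᴴ)).re

lemma blockOf_snd_le (l : List ℕ) (i : ℕ) : (blockOf l i).2 ≤ i := by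
  induction l generalizing i with
  | nil => simp [blockOf]
  | cons h t ih =>
    simp only [blockOf]
    split
    · exact le_rfl
    · exact (ih (i - h)).trans (Nat.sub_le i h)

lemma blockOf_snd_lt (l : List ℕ) (i : ℕ) (h : i < l.sum) :
    (blockOf l i).2 < (blockOf l i).1 := by
  induction l generalizing i with
  | nil => simp at h
  | cons k t ih =>
    simp only [blockOf]
    split
    · assumption
    · exact ih (i - k) (by simp only [List.sum_cons] at h; omega)

lemma blockOf_succ (l : List ℕ) (i : ℕ)
    (h : (blockOf l i).2 + 1 < (blockOf l i).1) :
    blockOf l (i + 1) = ((blockOf l i).1, (blockOf l i).2 + 1) := by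
  induction l generalizing i with
  | nil => simp [blockOf] at h
  | cons k t ih =>
    simp only [blockOf] at h ⊢
    by_cases hk : i < k
    · rw [if_pos hk] at h ⊢
      rw [if_pos (by omega)]
    · rw [if_neg hk] at h ⊢
      rw [if_neg (by omega)]
      have : i + 1 - k = (i - k) + 1 := by omega
      rw [this]
      exact ih _ h

lemma blockOf_succ_lt_sum (l : List ℕ) (i : ℕ)
    (h : (blockOf l i).2 + 1 < (blockOf l i).1) : i + 1 < l.sum := by
  induction l generalizing i with
  | nil => simp [blockOf] at h
  | cons k t ih =>
    simp only [blockOf, List.sum_cons] at h ⊢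
    split at h
    · omega
    · have := ih _ h
      omega

lemma blockOf_pred (l : List ℕ) (i : ℕ) (h : 1 ≤ (blockOf l (i + 1)).2) :
    blockOf l i = ((blockOf l (i + 1)).1, (blockOf l (i + 1)).2 - 1) := by
  induction l generalizing i with
  | nil => simp [blockOf]
  | cons k t ih =>
    simp only [blockOf] at h ⊢
    by_cases h1 : i + 1 < k
    · rw [if_pos h1] at h ⊢
      rw [if_pos (by omega)]
      simp
    · rw [if_neg h1] at h ⊢
      by_cases h2 : i < k
      · exfalso
        have hle := blockOf_snd_le t (i + 1 - k)
        omega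
      · rw [if_neg h2]
        have : i + 1 - k = (i - k) + 1 := by omega
        rw [this] at h ⊢
        exact ih _ h

-- relation [X, E] = 2E
lemma relXE (l : List ℕ) (n : ℕ) :
    XpiMat l n * EpiMat l n - EpiMat l n * XpiMat l n = (2 : ℂ) • EpiMat l n := by
  ext i j
  simp only [Matrix.sub_apply, Matrix.smul_apply, XpiMat, EpiMat, diagonal_mul, mul_diagonal,
    Matrix.of_apply, smul_eq_mul]
  by_cases hc : (j : ℕ) = (i : ℕ) + 1 ∧ (blockOf l (i : ℕ)).2 + 1 < (blockOf l (i : ℕ)).1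
  · rw [if_pos hc]
    obtain ⟨hj, hcond⟩ := hc
    have hs := blockOf_succ l i hcond
    rw [hj, hs]
    push_cast
    ring
  · rw [if_neg hc]
    ring

-- relation [E, Eᵀ] = X
lemma relEF (l : List ℕ) (n : ℕ) (hsum : l.sum = n) :
    EpiMat l n * (EpiMat l n)ᵀ - (EpiMat l n)ᵀ * EpiMat l n = XpiMat l n := by
  ext i j
  simp only [Matrix.sub_apply, Matrix.mul_apply, Matrix.transpose_apply, EpiMat, XpiMat,
    Matrix.of_apply, Matrix.diagonal_apply]
  by_cases hij : i = j
  · subst hij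
    rw [if_pos rfl]
    set k := (blockOf l (i : ℕ)).1 with hk
    set m := (blockOf l (i : ℕ)).2 with hm
    have hmk : m < k := by
      rw [hk, hm]; exact blockOf_snd_lt l i (by rw [hsum]; exact i.isLt)
    -- first sum
    have S1 : (∑ t : Fin n, (if (t : ℕ) = (i : ℕ) + 1 ∧ m + 1 < k then
          ((Real.sqrt ((m + 1) * (k - (m + 1))) : ℝ) : ℂ) else 0) *
        (if (t : ℕ) = (i : ℕ) + 1 ∧ m + 1 < k then
          ((Real.sqrt ((m + 1) * (k - (m + 1))) : ℝ) : ℂ) else 0))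
        = if m + 1 < k then (((m + 1) * (k - (m + 1)) : ℝ) : ℂ) else 0 := by
      by_cases hcond : m + 1 < k
      · have hin : (i : ℕ) + 1 < n := by
          have := blockOf_succ_lt_sum l i (by rw [← hk, ← hm]; exact hcond)
          omega
        rw [if_pos hcond]
        rw [Finset.sum_eq_single (⟨(i : ℕ) + 1, hin⟩ : Fin n)]
        · rw [if_pos ⟨rfl, hcond⟩]
          rw [← Complex.ofReal_mul, Real.mul_self_sqrt]
          have h1 : ((m : ℝ) + 1) ≤ k := by exact_mod_cast hcond.le
          nlinarith [h1]
        · intro t _ ht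
          rw [if_neg (fun hc => ht (Fin.ext hc.1))]
          ring
        · intro h; exact absurd (Finset.mem_univ _) h
      · rw [if_neg hcond]
        apply Finset.sum_eq_zero
        intro t _
        rw [if_neg (fun hc => hcond hc.2)]
        ring
    rw [S1]; clear S1
    -- second sum
    have S2 : (∑ t : Fin n, (if (i : ℕ) = (t : ℕ) + 1 ∧ (blockOf l (t : ℕ)).2 + 1 < (blockOf l (t : ℕ)).1 then
          ((Real.sqrt (((blockOf l (t : ℕ)).2 + 1) * ((blockOf l (t : ℕ)).1 - ((blockOf l (t : ℕ)).2 + 1))) : ℝ) : ℂ) else 0) *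
        (if (i : ℕ) = (t : ℕ) + 1 ∧ (blockOf l (t : ℕ)).2 + 1 < (blockOf l (t : ℕ)).1 then
          ((Real.sqrt (((blockOf l (t : ℕ)).2 + 1) * ((blockOf l (t : ℕ)).1 - ((blockOf l (t : ℕ)).2 + 1))) : ℝ) : ℂ) else 0))
        = if 1 ≤ m then ((m * (k - m) : ℝ) : ℂ) else 0 := by
      by_cases hm1 : 1 ≤ m
      · have hi1 : 1 ≤ (i : ℕ) := le_trans hm1 (by rw [hm]; exact blockOf_snd_le l i)
        have hin : (i : ℕ) - 1 < n := by omega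
        have hpred : blockOf l ((i : ℕ) - 1) = (k, m - 1) := by
          have := blockOf_pred l ((i : ℕ) - 1) (by rw [Nat.sub_add_cancel hi1, ← hm]; exact hm1)
          rw [Nat.sub_add_cancel hi1] at this
          rw [this, ← hk, ← hm]
        rw [if_pos hm1]
        rw [Finset.sum_eq_single (⟨(i : ℕ) - 1, hin⟩ : Fin n)]
        · have hcond : (blockOf l ((i:ℕ) - 1)).2 + 1 < (blockOf l ((i:ℕ) - 1)).1 := by
            rw [hpred]; omega
          rw [if_pos ⟨by simp [Nat.sub_add_cancel hi1], hcond⟩]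
          rw [hpred]
          dsimp only
          have hms : ((m - 1 : ℕ) : ℝ) + 1 = (m : ℝ) := by
            push_cast [Nat.cast_sub hm1]; ring
          rw [hms]
          rw [← Complex.ofReal_mul, Real.mul_self_sqrt]
          have h1 : (m : ℝ) ≤ k := by exact_mod_cast hmk.le
          have h2 : (1:ℝ) ≤ m := by exact_mod_cast hm1
          nlinarith
        · intro t _ ht
          rw [if_neg]
          · ring
          · rintro ⟨h1, -⟩
            apply ht
            apply Fin.ext
            simp only [Fin.val_mk]
            omega
        · intro h; exact absurd (Finset.mem_univ _) h
      · rw [if_neg hm1]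
        apply Finset.sum_eq_zero
        intro t _
        rw [if_neg]
        · ring
        · rintro ⟨h1, h2⟩
          have hb := blockOf_succ l (t : ℕ) h2
          rw [← h1] at hb
          have h4 := congrArg Prod.snd hb
          dsimp only at h4
          omega
    rw [S2]; clear S2
    -- now pure arithmetic
    by_cases hc1 : m + 1 < k <;> by_cases hc2 : 1 ≤ m <;>
      simp only [hc1, hc2, if_true, if_false]
    · push_cast
      ring
    · have hm0 : m = 0 := by omega
      simp only [hm0]
      push_cast
      ring
    · have hk1 : k = m + 1 := by omega
      simp only [hk1]
      push_cast
      ring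
    · have hm0 : m = 0 := by omega
      have hk1 : k = 1 := by omega
      simp only [hm0, hk1]
      norm_num
  · rw [if_neg hij]
    have Z1 : (∑ t : Fin n, (if (t : ℕ) = (i : ℕ) + 1 ∧ (blockOf l (i : ℕ)).2 + 1 < (blockOf l (i : ℕ)).1 then
          ((Real.sqrt (((blockOf l (i : ℕ)).2 + 1) * ((blockOf l (i : ℕ)).1 - ((blockOf l (i : ℕ)).2 + 1))) : ℝ) : ℂ) else 0) *
        (if (t : ℕ) = (j : ℕ) + 1 ∧ (blockOf l (j : ℕ)).2 + 1 < (blockOf l (j : ℕ)).1 then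
          ((Real.sqrt (((blockOf l (j : ℕ)).2 + 1) * ((blockOf l (j : ℕ)).1 - ((blockOf l (j : ℕ)).2 + 1))) : ℝ) : ℂ) else 0)) = 0 := by
      apply Finset.sum_eq_zero
      intro t _
      by_cases h1 : (t : ℕ) = (i : ℕ) + 1 ∧ (blockOf l (i : ℕ)).2 + 1 < (blockOf l (i : ℕ)).1
      · obtain ⟨h1a, -⟩ := h1
        have h2 : ¬((t : ℕ) = (j : ℕ) + 1 ∧ (blockOf l (j : ℕ)).2 + 1 < (blockOf l (j : ℕ)).1) := by
          rintro ⟨h2, -⟩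
          exact hij (Fin.ext (by omega))
        rw [if_neg h2, mul_zero]
      · rw [if_neg h1, zero_mul]
    have Z2 : (∑ t : Fin n, (if (i : ℕ) = (t : ℕ) + 1 ∧ (blockOf l (t : ℕ)).2 + 1 < (blockOf l (t : ℕ)).1 then
          ((Real.sqrt (((blockOf l (t : ℕ)).2 + 1) * ((blockOf l (t : ℕ)).1 - ((blockOf l (t : ℕ)).2 + 1))) : ℝ) : ℂ) else 0) *
        (if (j : ℕ) = (t : ℕ) + 1 ∧ (blockOf l (t : ℕ)).2 + 1 < (blockOf l (t : ℕ)).1 then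
          ((Real.sqrt (((blockOf l (t : ℕ)).2 + 1) * ((blockOf l (t : ℕ)).1 - ((blockOf l (t : ℕ)).2 + 1))) : ℝ) : ℂ) else 0)) = 0 := by
      apply Finset.sum_eq_zero
      intro t _
      by_cases h1 : (i : ℕ) = (t : ℕ) + 1 ∧ (blockOf l (t : ℕ)).2 + 1 < (blockOf l (t : ℕ)).1
      · obtain ⟨h1a, -⟩ := h1
        have h2 : ¬((j : ℕ) = (t : ℕ) + 1 ∧ (blockOf l (t : ℕ)).2 + 1 < (blockOf l (t : ℕ)).1) := by
          rintro ⟨h2, -⟩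
          exact hij (Fin.ext (by omega))
        rw [if_neg h2, mul_zero]
      · rw [if_neg h1, zero_mul]
    rw [Z1, Z2]
    ring

lemma keyLem {n : ℕ} (E F X : Matrix (Fin n) (Fin n) ℂ)
    (hFE : F * E = E * F - X)
    (hXE : X * E = E * X + (2 : ℂ) • E)
    (hXF : X * F = F * X - (2 : ℂ) • F)
    (u v w p q r : ℂ) :
    (u • E + v • F + w • X) * (p • E + q • F + r • X) -
      (p • E + q • F + r • X) * (u • E + v • F + w • X)
    = (u * q - v * p) • X + (2 * (w * p - u * r)) • E + (2 * (v * r - w * q)) • F := by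
  simp only [add_mul, mul_add, smul_mul_assoc, mul_smul_comm, hFE, hXE, hXF]
  module

/-- for `A = a·E^π + b·Ẽ^π + c·X^π` one has
`[A*, [A, [A*, A]]] = 2(|a|² + |b|² + 2|c|²)·[A*, A]`. -/
theorem stmt7 (n : ℕ) (l : List ℕ) (hsort : l.Pairwise (· ≥ ·)) (hpos : ∀ x ∈ l, 0 < x)
    (hsum : l.sum = n) (a b c : ℂ)
    (A : Matrix (Fin n) (Fin n) ℂ)
    (hA : A = a • EpiMat l n + b • (EpiMat l n)ᵀ + c • XpiMat l n) :
    Aᴴ * (A * (Aᴴ * A - A * Aᴴ) - (Aᴴ * A - A * Aᴴ) * A) -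
        (A * (Aᴴ * A - A * Aᴴ) - (Aᴴ * A - A * Aᴴ) * A) * Aᴴ
      = ((2 * (Complex.normSq a + Complex.normSq b + 2 * Complex.normSq c) : ℝ) : ℂ) •
          (Aᴴ * A - A * Aᴴ) := by
  have hE0 := relXE l n
  have hEF0 := relEF l n hsum
  have hconjE : (EpiMat l n)ᴴ = (EpiMat l n)ᵀ := by
    ext i j
    simp only [Matrix.conjTranspose_apply, Matrix.transpose_apply, EpiMat, Matrix.of_apply]
    split_ifs <;> simp
  have hconjX : (XpiMat l n)ᴴ = XpiMat l n := by
    ext i j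
    simp only [Matrix.conjTranspose_apply, XpiMat, Matrix.diagonal_apply]
    by_cases h : i = j
    · subst h; simp
    · simp [h, Ne.symm h]
  have hXt : (XpiMat l n)ᵀ = XpiMat l n := by
    simp [XpiMat, Matrix.diagonal_transpose]
  set E := EpiMat l n with hEdef
  set X := XpiMat l n with hXdef
  set F := Eᵀ with hFdef
  have hstar : ∀ i j, star (E i j) = E i j := by
    intro i j
    have h := congrFun (congrFun hconjE j) i
    simpa [Matrix.conjTranspose_apply, Matrix.transpose_apply, hFdef] using h
  have hconjE' : Eᴴ = F := by rw [hconjE, hFdef]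
  have hconjF : Fᴴ = E := by
    rw [hFdef]
    ext i j
    simp [Matrix.conjTranspose_apply, Matrix.transpose_apply, hstar]
  have hFE : F * E = E * F - X := by rw [← hEF0]; abel
  have hXE : X * E = E * X + (2 : ℂ) • E := by rw [← hE0]; abel
  have hFX : F * X - X * F = (2 : ℂ) • F := by
    have h := congrArg Matrix.transpose hE0
    simp only [Matrix.transpose_sub, Matrix.transpose_mul, Matrix.transpose_smul, hXt] at h
    rw [← hFdef] at h
    exact h
  have hXF : X * F = F * X - (2 : ℂ) • F := by rw [← hFX]; abel
  have hAs : Aᴴ = star b • E + star a • F + star c • X := by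
    rw [hA]
    simp only [Matrix.conjTranspose_add, Matrix.conjTranspose_smul, hconjE', hconjF, hconjX]
    module
  have e1 : Aᴴ * A - A * Aᴴ = (2 * (star c * a - star b * c)) • E + (2 * (star a * c - star c * b)) • F + (star b * b - star a * a) • X := by
    rw [hAs, hA, keyLem E F X hFE hXE hXF (star b) (star a) (star c) a b c]
    module
  have e2 : A * (Aᴴ * A - A * Aᴴ) - (Aᴴ * A - A * Aᴴ) * A
      = (2 * (c * (2 * (star c * a - star b * c)) - a * (star b * b - star a * a))) • E + (2 * (b * (star b * b - star a * a) - c * (2 * (star a * c - star c * b)))) • F + (a * (2 * (star a * c - star c * b)) - b * (2 * (star c * a - star b * c))) • X := by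
    rw [e1, hA, keyLem E F X hFE hXE hXF a b c (2 * (star c * a - star b * c)) (2 * (star a * c - star c * b)) (star b * b - star a * a)]
    module
  have e3 : Aᴴ * (A * (Aᴴ * A - A * Aᴴ) - (Aᴴ * A - A * Aᴴ) * A) -
        (A * (Aᴴ * A - A * Aᴴ) - (Aᴴ * A - A * Aᴴ) * A) * Aᴴ
      = (2 * (star c * (2 * (c * (2 * (star c * a - star b * c)) - a * (star b * b - star a * a))) - star b * (a * (2 * (star a * c - star c * b)) - b * (2 * (star c * a - star b * c))))) • E + (2 * (star a * (a * (2 * (star a * c - star c * b)) - b * (2 * (star c * a - star b * c))) - star c * (2 * (b * (star b * b - star a * a) - c * (2 * (star a * c - star c * b)))))) • F + (star b * (2 * (b * (star b * b - star a * a) - c * (2 * (star a * c - star c * b)))) - star a * (2 * (c * (2 * (star c * a - star b * c)) - a * (star b * b - star a * a)))) • X := by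
    rw [e2, hAs, keyLem E F X hFE hXE hXF (star b) (star a) (star c) (2 * (c * (2 * (star c * a - star b * c)) - a * (star b * b - star a * a))) (2 * (b * (star b * b - star a * a) - c * (2 * (star a * c - star c * b)))) (a * (2 * (star a * c - star c * b)) - b * (2 * (star c * a - star b * c)))]
    module
  rw [e3, e1]
  match_scalars <;>
  · rw [← Complex.mul_conj, ← Complex.mul_conj, ← Complex.mul_conj]
    simp only [Complex.star_def]
    ring
end

section
/- Let r ≥ 1, let λ₁ > λ₂ > ⋯ > λ_r be distinct positive integers with multiplicities k₁, …, k_r ≥ 1, and set n = Σᵢ kᵢλᵢ. For a trace-free Hermitian 2×2 matrix X (i.e., X = (α, β; conj(β), −α) with α ∈ ℝ, β ∈ ℂ), let j_π(X) denote the n×n block-diagonal matrix consisting of k₁ consecutive copies of α·x_{λ₁} + β·e_{λ₁} + conj(β)·ẽ_{λ₁}, followed by k₂ copies of α·x_{λ₂} + β·e_{λ₂} + conj(β)·ẽ_{λ₂}, and so on. If an n×n complex matrix A satisfies j_π(X)·A = A·j_π(X) for every trace-free Hermitian 2×2 matrix X, then A is block diagonal of the form A = diag(A₁ ⊗ I_{λ₁},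 A₂ ⊗ I_{λ₂}, …, A_r ⊗ I_{λ_r}), where each Aᵢ is a kᵢ×kᵢ complex matrix and Aᵢ ⊗ I_{λᵢ} is the Kronecker product (the (kᵢλᵢ)×(kᵢλᵢ) matrix whose (k,l) block of size λᵢ is (Aᵢ)_{kl}·I_{λᵢ}). -/
open Matrix

/-- The image under the irreducible representation `j_k` of the trace-free Hermitian
`2×2` matrix `(α, β; conj β, −α)`: the matrix `α·x_k + β·e_k + conj(β)·ẽ_k`. -/
noncomputable def herm2Img (k : ℕ) (α : ℝ) (β : ℂ) : Matrix (Fin k) (Fin k) ℂ :=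
  (α : ℂ) • xMat k + β • eMat k + (starRingEnd ℂ β) • (eMat k)ᵀ

noncomputable def cc (k a : ℕ) : ℂ :=
  (Real.sqrt ((a + 1) * (k - (a + 1))) : ℂ)

lemma cc_ne_zero {k a : ℕ} (h : a + 1 < k) : cc k a ≠ 0 := by
  simp only [cc, Complex.ofReal_ne_zero]
  rw [Real.sqrt_ne_zero']
  have h1 : (0:ℝ) < (a:ℝ) + 1 := by positivity
  have h2 : (0:ℝ) < (k:ℝ) - (a + 1) := by
    have : (a:ℝ) + 1 < k := by exact_mod_cast h
    linarith
  nlinarith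

lemma eMat_apply (k : ℕ) (i j : Fin k) :
    eMat k i j = if (j : ℕ) = (i : ℕ) + 1 then cc k (i : ℕ) else 0 := rfl

lemma eMat_mul_apply {m n : ℕ} (M : Matrix (Fin m) (Fin n) ℂ) (a : Fin m) (b : Fin n)
    (ha : (a : ℕ) + 1 < m) :
    (eMat m * M) a b = cc m (a : ℕ) * M ⟨(a : ℕ) + 1, ha⟩ b := by
  rw [mul_apply, Fintype.sum_eq_single (⟨(a:ℕ)+1, ha⟩ : Fin m)]
  · simp [eMat_apply]
  · intro x hx
    have : (x:ℕ) ≠ (a:ℕ)+1 := fun h => hx (Fin.ext h)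
    simp [eMat_apply, this]

lemma eMat_mul_apply_top {m n : ℕ} (M : Matrix (Fin m) (Fin n) ℂ) (a : Fin m) (b : Fin n)
    (ha : (a : ℕ) + 1 = m) : (eMat m * M) a b = 0 := by
  rw [mul_apply]
  apply Finset.sum_eq_zero
  intro x _
  have : (x:ℕ) ≠ (a:ℕ)+1 := by omega
  simp [eMat_apply, this]

lemma mul_eMat_apply {m n : ℕ} (M : Matrix (Fin m) (Fin n) ℂ) (a : Fin m) (b : Fin n)
    (hb : 0 < (b : ℕ)) :
    (M * eMat n) a b = M a ⟨(b : ℕ) - 1, by omega⟩ * cc n ((b : ℕ) - 1) := by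
  rw [mul_apply, Fintype.sum_eq_single (⟨(b:ℕ)-1, by omega⟩ : Fin n)]
  · simp only [eMat_apply]
    rw [if_pos (by omega)]
  · intro x hx
    have : (b:ℕ) ≠ (x:ℕ)+1 := by
      intro h; exact hx (Fin.ext (show (_:ℕ) = _ by simp; omega))
    simp [eMat_apply, this]

lemma mul_eMat_apply_zero {m n : ℕ} (M : Matrix (Fin m) (Fin n) ℂ) (a : Fin m) (b : Fin n)
    (hb : (b : ℕ) = 0) : (M * eMat n) a b = 0 := by
  rw [mul_apply]
  apply Finset.sum_eq_zero
  intro x _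
  have : (b:ℕ) ≠ (x:ℕ)+1 := by omega
  simp [eMat_apply, this]

lemma tr_mul_apply {m n : ℕ} (M : Matrix (Fin m) (Fin n) ℂ) (a : Fin m) (b : Fin n)
    (ha : 0 < (a : ℕ)) :
    ((eMat m)ᵀ * M) a b = cc m ((a : ℕ) - 1) * M ⟨(a : ℕ) - 1, by omega⟩ b := by
  rw [mul_apply, Fintype.sum_eq_single (⟨(a:ℕ)-1, by omega⟩ : Fin m)]
  · simp only [transpose_apply, eMat_apply]
    rw [if_pos (by omega)]
  · intro x hx
    have : (a:ℕ) ≠ (x:ℕ)+1 := by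
      intro h; exact hx (Fin.ext (show (_:ℕ) = _ by simp; omega))
    simp [eMat_apply, this]

lemma tr_mul_apply_zero {m n : ℕ} (M : Matrix (Fin m) (Fin n) ℂ) (a : Fin m) (b : Fin n)
    (ha : (a : ℕ) = 0) : ((eMat m)ᵀ * M) a b = 0 := by
  rw [mul_apply]
  apply Finset.sum_eq_zero
  intro x _
  have : (a:ℕ) ≠ (x:ℕ)+1 := by omega
  simp [eMat_apply, this]

lemma mul_tr_apply {m n : ℕ} (M : Matrix (Fin m) (Fin n) ℂ) (a : Fin m) (b : Fin n)
    (hb : (b : ℕ) + 1 < n) :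
    (M * (eMat n)ᵀ) a b = M a ⟨(b : ℕ) + 1, hb⟩ * cc n (b : ℕ) := by
  rw [mul_apply, Fintype.sum_eq_single (⟨(b:ℕ)+1, hb⟩ : Fin n)]
  · simp [eMat_apply]
  · intro x hx
    have : (x:ℕ) ≠ (b:ℕ)+1 := fun h => hx (Fin.ext h)
    simp [eMat_apply, this]

lemma mul_tr_apply_top {m n : ℕ} (M : Matrix (Fin m) (Fin n) ℂ) (a : Fin m) (b : Fin n)
    (hb : (b : ℕ) + 1 = n) : (M * (eMat n)ᵀ) a b = 0 := by
  rw [mul_apply]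
  apply Finset.sum_eq_zero
  intro x _
  have : (x:ℕ) ≠ (b:ℕ)+1 := by omega
  simp [eMat_apply, this]

lemma keyLemma {m n : ℕ} (M : Matrix (Fin m) (Fin n) ℂ)
    (hX : xMat m * M = M * xMat n)
    (hE : eMat m * M = M * eMat n)
    (hF : (eMat m)ᵀ * M = M * (eMat n)ᵀ) :
    ∃ μ : ℂ, ∀ a b, M a b = if m = n ∧ (a : ℕ) = (b : ℕ) then μ else 0 := by
  -- weight condition
  have hW : ∀ (a : Fin m) (b : Fin n), (m : ℤ) - 2 * (a:ℕ) ≠ (n : ℤ) - 2 * (b:ℕ) → M a b = 0 := by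
    intro a b hab
    have h1 := congrFun (congrFun hX a) b
    simp only [xMat, diagonal_mul, mul_diagonal] at h1
    have hne : ((((m:ℤ) - 1 - 2 * (a:ℕ)) : ℤ) : ℂ) ≠ ((((n:ℤ) - 1 - 2 * (b:ℕ)) : ℤ) : ℂ) := by
      exact_mod_cast (by omega : ((m:ℤ) - 1 - 2 * (a:ℕ)) ≠ ((n:ℤ) - 1 - 2 * (b:ℕ)))
    have h2 : ((((m:ℤ) - 1 - 2 * (a:ℕ)) : ℤ) : ℂ) * M a b
        = ((((n:ℤ) - 1 - 2 * (b:ℕ)) : ℤ) : ℂ) * M a b := by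
      rw [h1]; ring
    rcases mul_eq_zero.1 (by linear_combination h2 :
        (((((m:ℤ) - 1 - 2 * (a:ℕ)) : ℤ) : ℂ) - ((((n:ℤ) - 1 - 2 * (b:ℕ)) : ℤ) : ℂ)) * M a b = 0)
        with h | h
    · exact absurd (by linear_combination h) hne
    · exact h
  by_cases hmn : m = n
  · subst hmn
    rcases Nat.eq_zero_or_pos m with hm | hm
    · exact ⟨0, fun a => absurd a.2 (by omega)⟩
    · refine ⟨M ⟨0, hm⟩ ⟨0, hm⟩, ?_⟩
      have diag : ∀ j (hj : j < m), M ⟨j, hj⟩ ⟨j, hj⟩ = M ⟨0, hm⟩ ⟨0, hm⟩ := by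
        intro j
        induction j with
        | zero => intro hj; rfl
        | succ j ih =>
          intro hj
          have hj' : j < m := by omega
          have h1 := congrFun (congrFun hE ⟨j, hj'⟩) ⟨j + 1, hj⟩
          rw [eMat_mul_apply M ⟨j, hj'⟩ ⟨j+1, hj⟩ (by simpa using hj),
            mul_eMat_apply M ⟨j, hj'⟩ ⟨j+1, hj⟩ (by simp)] at h1
          simp only [Fin.val_mk, Nat.add_sub_cancel] at h1
          have := mul_left_cancel₀ (cc_ne_zero (k := m) (a := j) (by omega))
            (h1.trans (mul_comm _ _))
          rw [this, ih hj']
      intro a b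
      by_cases hab : (a : ℕ) = (b : ℕ)
      · have : a = b := Fin.ext hab
        subst this
        rw [if_pos ⟨rfl, rfl⟩]
        have := diag (a : ℕ) a.2
        simpa using this
      · rw [if_neg (by tauto)]
        exact hW a b (by omega)
  · refine ⟨0, fun a b => ?_⟩
    rw [if_neg (by tauto)]
    by_cases hw : (m : ℤ) - 2 * (a:ℕ) = (n : ℤ) - 2 * (b:ℕ)
    swap
    · exact hW a b hw
    rcases Nat.lt_or_ge n m with hlt | hge
    · -- m > n : a = b + t, m = n + 2t
      obtain ⟨t, hab, hmt, ht⟩ : ∃ t, (a:ℕ) = (b:ℕ) + t ∧ m = n + 2 * t ∧ 1 ≤ t := by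
        refine ⟨(a:ℕ) - (b:ℕ), by omega, by omega, by omega⟩
      have claim : ∀ j (hj : j < n), M ⟨j + t, by omega⟩ ⟨j, hj⟩ = 0 := by
        intro j
        induction j with
        | zero =>
          intro hj
          have h1 := congrFun (congrFun hE ⟨t - 1, by omega⟩) ⟨0, hj⟩
          rw [eMat_mul_apply M _ _ (by simp; omega),
            mul_eMat_apply_zero M _ _ (by simp)] at h1
          simp only [Fin.val_mk] at h1
          have h2 := (mul_eq_zero.1 h1).resolve_left (cc_ne_zero (by omega))
          have he : (⟨(t - 1) + 1, by omega⟩ : Fin m) = ⟨0 + t, by omega⟩ :=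
            Fin.mk_eq_mk.mpr (by omega)
          rwa [he] at h2
        | succ j ih =>
          intro hj
          have hj' : j < n := by omega
          have h1 := congrFun (congrFun hE ⟨j + t, by omega⟩) ⟨j + 1, hj⟩
          rw [eMat_mul_apply M _ _ (by simp; omega),
            mul_eMat_apply M _ _ (by simp)] at h1
          simp only [Fin.val_mk, Nat.add_sub_cancel] at h1
          rw [ih hj'] at h1
          rw [zero_mul] at h1
          have h2 := mul_eq_zero.1 h1
          rcases h2 with h2 | h2
          · exact absurd h2 (cc_ne_zero (by omega))
          · have : (⟨j + t + 1, by omega⟩ : Fin m) = ⟨j + 1 + t, by omega⟩ := Fin.mk_eq_mk.mpr (by omega)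
            rw [← this]; exact h2
      have : a = ⟨(b:ℕ) + t, by omega⟩ := Fin.ext hab
      rw [this]
      exact claim (b:ℕ) b.2
    · -- m < n (m ≠ n) : b = a + t, n = m + 2t
      have hlt : m < n := by omega
      obtain ⟨t, hab, hmt, ht⟩ : ∃ t, (b:ℕ) = (a:ℕ) + t ∧ n = m + 2 * t ∧ 1 ≤ t := by
        refine ⟨(b:ℕ) - (a:ℕ), by omega, by omega, by omega⟩
      have claim : ∀ j (hj : j < m), M ⟨j, hj⟩ ⟨j + t, by omega⟩ = 0 := by
        intro j
        induction j with
        | zero =>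
          intro hj
          have h1 := congrFun (congrFun hF ⟨0, hj⟩) ⟨t - 1, by omega⟩
          rw [tr_mul_apply_zero M _ _ (by simp),
            mul_tr_apply M _ _ (by simp; omega)] at h1
          simp only [Fin.val_mk] at h1
          have h2 := mul_eq_zero.1 h1.symm
          rcases h2 with h2 | h2
          · have : (⟨(t-1) + 1, by omega⟩ : Fin n) = ⟨0 + t, by omega⟩ := Fin.mk_eq_mk.mpr (by omega)
            rw [← this]; exact h2
          · exact absurd h2 (cc_ne_zero (by omega))
        | succ j ih =>
          intro hj
          have hj' : j < m := by omega
          have h1 := congrFun (congrFun hF ⟨j + 1, hj⟩) ⟨j + t, by omega⟩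
          rw [tr_mul_apply M _ _ (by simp),
            mul_tr_apply M _ _ (by simp; omega)] at h1
          simp only [Fin.val_mk, Nat.add_sub_cancel] at h1
          rw [ih hj'] at h1
          rw [mul_zero] at h1
          have h2 := mul_eq_zero.1 h1.symm
          rcases h2 with h2 | h2
          · have : (⟨j + t + 1, by omega⟩ : Fin n) = ⟨j + 1 + t, by omega⟩ := Fin.mk_eq_mk.mpr (by omega)
            rw [← this]; exact h2
          · exact absurd h2 (cc_ne_zero (by omega))
      have : b = ⟨(a:ℕ) + t, by omega⟩ := Fin.ext hab
      rw [this]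
      exact claim (a:ℕ) a.2
section BlockHelpers
variable {ι : Type*} [Fintype ι] [DecidableEq ι] {β : ι → Type*}
  [∀ i, Fintype (β i)] [∀ i, DecidableEq (β i)]

lemma blockDiagonal'_mul_apply (D : ∀ i, Matrix (β i) (β i) ℂ)
    (A : Matrix ((i : ι) × β i) ((i : ι) × β i) ℂ) (p : ι) (a : β p) (q : (i : ι) × β i) :
    (blockDiagonal' D * A) ⟨p, a⟩ q = ∑ a', D p a a' * A ⟨p, a'⟩ q := by
  rw [mul_apply, ← Finset.univ_sigma_univ, Finset.sum_sigma]
  rw [Finset.sum_eq_single p]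
  · apply Finset.sum_congr rfl
    intro a' _
    rw [blockDiagonal'_apply_eq]
  · intro i _ hi
    apply Finset.sum_eq_zero
    intro a' _
    rw [blockDiagonal'_apply_ne _ _ _ (Ne.symm hi), zero_mul]
  · simp

lemma mul_blockDiagonal'_apply (D : ∀ i, Matrix (β i) (β i) ℂ)
    (A : Matrix ((i : ι) × β i) ((i : ι) × β i) ℂ) (p : (i : ι) × β i) (q : ι) (b : β q) :
    (A * blockDiagonal' D) p ⟨q, b⟩ = ∑ b', A p ⟨q, b'⟩ * D q b' b := by
  rw [mul_apply, ← Finset.univ_sigma_univ, Finset.sum_sigma]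
  rw [Finset.sum_eq_single q]
  · apply Finset.sum_congr rfl
    intro b' _
    rw [blockDiagonal'_apply_eq]
  · intro i _ hi
    apply Finset.sum_eq_zero
    intro b' _
    rw [blockDiagonal'_apply_ne _ _ _ hi, mul_zero]
  · simp

lemma block_restrict (D : ∀ i, Matrix (β i) (β i) ℂ)
    (A : Matrix ((i : ι) × β i) ((i : ι) × β i) ℂ)
    (h : blockDiagonal' D * A = A * blockDiagonal' D) (p q : ι) :
    D p * (Matrix.of fun a b => A ⟨p, a⟩ ⟨q, b⟩)
      = (Matrix.of fun a b => A ⟨p, a⟩ ⟨q, b⟩) * D q := by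
  ext a b
  have h1 := congrFun (congrFun h ⟨p, a⟩) ⟨q, b⟩
  rw [blockDiagonal'_mul_apply, mul_blockDiagonal'_apply] at h1
  rw [mul_apply, mul_apply]
  simpa using h1

end BlockHelpers

/-- if an `n×n` matrix `A` (indexed by the blocks of the partition
`π = (λ₁^{k₁}, …, λ_r^{k_r})`) commutes with `j_π(X)` for every trace-free Hermitian `2×2`
matrix `X`, then `A = diag(A₁ ⊗ I_{λ₁}, …, A_r ⊗ I_{λ_r})` for some `kᵢ×kᵢ` matrices `Aᵢ`. -/
theorem stmt19 (r : ℕ) (hr : 1 ≤ r) (lam : Fin r → ℕ) (k : Fin r → ℕ)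
    (hlampos : ∀ i, 0 < lam i) (hdec : ∀ i j : Fin r, i < j → lam j < lam i)
    (hk : ∀ i, 1 ≤ k i) (n : ℕ) (hn : n = ∑ i, k i * lam i)
    (A : Matrix ((p : (i : Fin r) × Fin (k i)) × Fin (lam p.1))
      ((p : (i : Fin r) × Fin (k i)) × Fin (lam p.1)) ℂ)
    (hcomm : ∀ (α : ℝ) (β : ℂ),
      (Matrix.blockDiagonal' fun p : (i : Fin r) × Fin (k i) => herm2Img (lam p.1) α β) * A
        = A * (Matrix.blockDiagonal' fun p : (i : Fin r) × Fin (k i) =>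
            herm2Img (lam p.1) α β)) :
    ∃ B : (i : Fin r) → Matrix (Fin (k i)) (Fin (k i)) ℂ,
      ∀ p q : (p : (i : Fin r) × Fin (k i)) × Fin (lam p.1),
        A p q =
          if h : p.1.1 = q.1.1 then
            (if ((p.2 : ℕ) = (q.2 : ℕ)) then
              B p.1.1 p.1.2 (Fin.cast (congrArg k h.symm) q.1.2)
            else 0)
          else 0 := by
  set ι := (i : Fin r) × Fin (k i) with hι
  set E := blockDiagonal' (fun p : ι => eMat (lam p.1)) with hEdef
  set F := blockDiagonal' (fun p : ι => (eMat (lam p.1))ᵀ) with hFdef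
  set H := blockDiagonal' (fun p : ι => xMat (lam p.1)) with hHdef
  have hH : H * A = A * H := by
    have h := hcomm 1 0
    have e1 : (blockDiagonal' fun p : ι => herm2Img (lam p.1) 1 0) = H := by
      rw [hHdef]; congr 1; funext p; simp [herm2Img]
    rwa [e1] at h
  have hEF : (E + F) * A = A * (E + F) := by
    have h := hcomm 0 1
    have e0 : (fun p : ι => herm2Img (lam p.1) 0 1)
        = (fun p : ι => eMat (lam p.1)) + (fun p : ι => (eMat (lam p.1))ᵀ) := by
      funext p; simp [herm2Img]
    have e1 : (blockDiagonal' fun p : ι => herm2Img (lam p.1) 0 1) = E + F := by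
      rw [e0, blockDiagonal'_add, ← hEdef, ← hFdef]
    rwa [e1] at h
  have hIEF : (Complex.I • E - Complex.I • F) * A = A * (Complex.I • E - Complex.I • F) := by
    have h := hcomm 0 Complex.I
    have e0 : (fun p : ι => herm2Img (lam p.1) 0 Complex.I)
        = Complex.I • (fun p : ι => eMat (lam p.1))
          - Complex.I • (fun p : ι => (eMat (lam p.1))ᵀ) := by
      funext p; simp [herm2Img, Complex.conj_I, sub_eq_add_neg, neg_smul]
    have e1 : (blockDiagonal' fun p : ι => herm2Img (lam p.1) 0 Complex.I)
        = Complex.I • E - Complex.I • F := by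
      rw [e0, blockDiagonal'_sub, blockDiagonal'_smul, blockDiagonal'_smul, ← hEdef, ← hFdef]
    rwa [e1] at h
  have h2' : E * A + F * A = A * E + A * F := by
    simpa [add_mul, mul_add] using hEF
  have h3' : E * A - F * A = A * E - A * F := by
    apply smul_right_injective _ Complex.I_ne_zero
    have : Complex.I • (E * A) - Complex.I • (F * A)
        = Complex.I • (A * E) - Complex.I • (A * F) := by
      simpa [sub_mul, mul_sub, smul_mul_assoc, mul_smul_comm] using hIEF
    simpa [smul_sub] using this
  have hE : E * A = A * E := by
    apply smul_right_injective _ (two_ne_zero (α := ℂ))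
    show (2:ℂ) • (E * A) = (2:ℂ) • (A * E)
    rw [two_smul, two_smul]
    calc E * A + E * A = (E * A + F * A) + (E * A - F * A) := by abel
      _ = (A * E + A * F) + (A * E - A * F) := by rw [h2', h3']
      _ = A * E + A * E := by abel
  have hF : F * A = A * F := by
    apply smul_right_injective _ (two_ne_zero (α := ℂ))
    show (2:ℂ) • (F * A) = (2:ℂ) • (A * F)
    rw [two_smul, two_smul]
    calc F * A + F * A = (E * A + F * A) - (E * A - F * A) := by abel
      _ = (A * E + A * F) - (A * E - A * F) := by rw [h2', h3']
      _ = A * F + A * F := by abel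
  refine ⟨fun i K L => A ⟨⟨i, K⟩, ⟨0, hlampos i⟩⟩ ⟨⟨i, L⟩, ⟨0, hlampos i⟩⟩, ?_⟩
  rintro ⟨pp, a⟩ ⟨qq, b⟩
  set M : Matrix (Fin (lam pp.1)) (Fin (lam qq.1)) ℂ :=
    Matrix.of fun a b => A ⟨pp, a⟩ ⟨qq, b⟩ with hM
  have hX' := block_restrict _ A hH pp qq
  have hE' := block_restrict _ A hE pp qq
  have hF' := block_restrict _ A hF pp qq
  obtain ⟨μ, hμ⟩ := keyLemma M hX' hE' hF'
  obtain ⟨i, K⟩ := pp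
  obtain ⟨i', L⟩ := qq
  by_cases h : i = i'
  · subst h
    rw [dif_pos rfl]
    have hcast : ∀ h' : k i = k i, Fin.cast h' L = L := fun _ => rfl
    rw [hcast]
    have hB : A ⟨⟨i, K⟩, ⟨0, hlampos i⟩⟩ ⟨⟨i, L⟩, ⟨0, hlampos i⟩⟩ = μ := by
      have h5 := hμ ⟨0, hlampos i⟩ ⟨0, hlampos i⟩
      rw [hM] at h5
      simp only [of_apply] at h5
      simpa using h5
    have h5 := hμ a b
    rw [hM] at h5
    simp only [of_apply] at h5
    by_cases hab : (a : ℕ) = (b : ℕ)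
    · rw [if_pos hab]
      show A ⟨⟨i, K⟩, a⟩ ⟨⟨i, L⟩, b⟩ = A ⟨⟨i, K⟩, ⟨0, hlampos i⟩⟩ ⟨⟨i, L⟩, ⟨0, hlampos i⟩⟩
      rw [hB]
      simpa [hab] using h5
    · rw [if_neg hab]
      simpa [hab] using h5
  · rw [dif_neg h]
    have hlam : lam i ≠ lam i' := by
      rcases lt_trichotomy i i' with hlt | heq | hgt
      · exact (hdec _ _ hlt).ne'
      · exact absurd heq h
      · exact (hdec _ _ hgt).ne
    have h5 := hμ a b
    rw [hM] at h5
    simp only [of_apply] at h5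
    simpa [hlam] using h5
end
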